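/- The group presented by ⟨a, b | a⁻¹ba⁻¹b⁻¹aba⁻¹bab⁻¹ = 1⟩ is not isomorphic to ℤ. -/

import Mathlib

/-!
The relator is satisfied by the non-commuting 3-cycles `a ↦ (1 2 3) = (1 3)(1 2)` and
`b ↦ (0 1 3) = (0 3)(0 1)` of `A₄`, so the presented group maps onto a non-abelian group
and cannot be `ℤ`.
-/

/-- The free group on two generators. -/
abbrev F : Type := FreeGroup (Fin 2)

/-- The generator `a`. -/
def a : F := FreeGroup.of 0

/-- The generator `b`. -/
def b : F := FreeGroup.of 1

/-- The relator set of `⟨a, b | a⁻¹ba⁻¹b⁻¹aba⁻¹bab⁻¹ = 1⟩`. -/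
def rels : Set F := {a⁻¹ * b * a⁻¹ * b⁻¹ * a * b * a⁻¹ * b * a * b⁻¹}

open Equiv

theorem not_nonempty_mulEquiv_multiplicative_int_of_not_commute {G : Type*} [Group G] {x y : G}
    (h : ¬ Commute x y) : ¬ Nonempty (G ≃* Multiplicative ℤ) := fun ⟨e⟩ ↦
  h <| (commute_map_iff e.injective).mp (Commute.all _ _)

def relsToPerm : PresentedGroup rels →* Perm (Fin 4) :=
  PresentedGroup.toGroup (rels := rels) (f := ![swap 1 3 * swap 1 2, swap 0 3 * swap 0 1]) <| by
    rintro r (rfl : r = _)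
    simp only [a, b, map_mul, map_inv, FreeGroup.lift_apply_of]
    decide

theorem not_commute_presentedGroup_of_zero_of_one :
    ¬ Commute (PresentedGroup.of 0 : PresentedGroup rels) (PresentedGroup.of 1) := fun h ↦ by
  have h_perm := h.map relsToPerm
  simp only [relsToPerm, PresentedGroup.toGroup.of, commute_iff_eq] at h_perm
  exact absurd h_perm (by decide)

/-- The group presented by `⟨a, b | a⁻¹ba⁻¹b⁻¹aba⁻¹bab⁻¹ = 1⟩` is not isomorphic to `ℤ`. -/
theorem presentedGroup_62_c4c5_not_iso_int :
    ¬ Nonempty (PresentedGroup rels ≃* Multiplicative ℤ) :=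
  not_nonempty_mulEquiv_multiplicative_int_of_not_commute
    not_commute_presentedGroup_of_zero_of_one
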